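/- Let γ_{M_ℂ} : ℂ² → ℂ⁵ be given by γ_{M_ℂ}(t₁,t₂) = (t₁, t₂, t₁², 2t₁t₂, t₂²), and for f : ℂ⁵ → ℝ define R_ℂ f(x) = ∫_{{t ∈ ℂ² : |t₁| + |t₂| ≤ 1}} f(x + γ_{M_ℂ}(t)) dt, where dt is Lebesgue measure on ℂ² identified with ℝ⁴. If p, q ∈ [1,∞] satisfy q > p and (1/p, 1/q) lies outside the closed triangle given by the convex hull of the points (0,0), (1,1), and (5/8, 3/8), then there is no finite constant C such that ‖R_ℂ f‖_{L^q(ℂ⁵)} ≤ C ‖f‖_{L^p(ℂ⁵)} holds for all nonnegative f ∈ L^p(ℂ⁵). -/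

import Mathlib

open MeasureTheory Set
open scoped ENNReal NNReal

noncomputable def gammaMC (t : Fin 2 → ℂ) : Fin 5 → ℂ :=
  ![t 0, t 1, (t 0) ^ 2, 2 * t 0 * t 1, (t 1) ^ 2]

open Metric

noncomputable section

lemma triangle_mem {u v : ℝ} (hvu : v ≤ u) (h1 : 3/5*u ≤ v) (h2 : 5/3*u - 2/3 ≤ v) :
    (u, v) ∈ convexHull ℝ {((0:ℝ),(0:ℝ)), (1,1), (5/8,3/8)} := by
  have hconv : Convex ℝ (convexHull ℝ {((0:ℝ),(0:ℝ)), (1,1), (5/8,3/8)}) := convex_convexHull _ _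
  have := hconv.sum_mem (t := Finset.univ) (w := ![1 - (5/2)*u + (3/2)*v, (5/2)*v - (3/2)*u, 4*(u-v)])
    (z := ![((0:ℝ),(0:ℝ)), (1,1), (5/8,3/8)])
    (by
      intro i _
      fin_cases i <;> simp <;> linarith)
    (by simp [Fin.sum_univ_three]; ring)
    (by
      intro i _
      fin_cases i <;> simp [subset_convexHull ℝ {((0:ℝ),(0:ℝ)), (1,1), (5/8,3/8)}] <;>
        apply subset_convexHull <;> simp)
  convert this using 1
  simp [Fin.sum_univ_three, Prod.ext_iff]
  constructor <;> ring

def slab (g2 g3 g4 : ℂ → ℂ → ℂ) (r0 r1 r2 r3 r4 : ℝ) : Set (Fin 5 → ℂ) :=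
  {x | ‖x 0‖ ≤ r0 ∧ ‖x 1‖ ≤ r1 ∧
       ‖x 2 - g2 (x 0) (x 1)‖ ≤ r2 ∧
       ‖x 3 - g3 (x 0) (x 1)‖ ≤ r3 ∧
       ‖x 4 - g4 (x 0) (x 1)‖ ≤ r4}

lemma measurable_slab {g2 g3 g4 : ℂ → ℂ → ℂ}
    (hg2 : Measurable (Function.uncurry g2)) (hg3 : Measurable (Function.uncurry g3))
    (hg4 : Measurable (Function.uncurry g4)) (r0 r1 r2 r3 r4 : ℝ) :
    MeasurableSet (slab g2 g3 g4 r0 r1 r2 r3 r4) := by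
  have h01 : Measurable (fun x : Fin 5 → ℂ => (x 0, x 1)) :=
    (measurable_pi_apply 0).prodMk (measurable_pi_apply 1)
  have habs : ∀ (f : (Fin 5 → ℂ) → ℂ), Measurable f →
      Measurable (fun x => ‖f x‖) := by
    intro f hf
    simpa using hf.norm
  refine MeasurableSet.inter ?_ (MeasurableSet.inter ?_ (MeasurableSet.inter ?_
    (MeasurableSet.inter ?_ ?_)))
  · exact measurableSet_le (habs _ (measurable_pi_apply 0)) measurable_const
  · exact measurableSet_le (habs _ (measurable_pi_apply 1)) measurable_const
  · exact measurableSet_le (habs _ ((measurable_pi_apply 2).sub (hg2.comp h01))) measurable_const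
  · exact measurableSet_le (habs _ ((measurable_pi_apply 3).sub (hg3.comp h01))) measurable_const
  · exact measurableSet_le (habs _ ((measurable_pi_apply 4).sub (hg4.comp h01))) measurable_const

lemma volume_slab {g2 g3 g4 : ℂ → ℂ → ℂ}
    (hg2 : Measurable (Function.uncurry g2)) (hg3 : Measurable (Function.uncurry g3))
    (hg4 : Measurable (Function.uncurry g4)) {r0 r1 r2 r3 r4 : ℝ}
    (h0 : 0 ≤ r0) (h1 : 0 ≤ r1) (h2 : 0 ≤ r2) (h3 : 0 ≤ r3) (h4 : 0 ≤ r4) :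
    volume (slab g2 g3 g4 r0 r1 r2 r3 r4)
      = ENNReal.ofReal (Real.pi ^ 5 * (r0*r1*r2*r3*r4)^2) := by
  classical
  set Φ : (Fin 5 → ℂ) → ℂ × (ℂ × (Fin 3 → ℂ)) :=
    fun x => (x 0, (x 1, fun k => x k.succ.succ)) with hΦdef
  have hΦ : MeasurePreserving Φ volume volume := by
    have h1' := MeasureTheory.volume_preserving_piFinSuccAbove (fun _ : Fin 5 => ℂ) 0
    have h2' := (MeasurePreserving.id (volume : Measure ℂ)).prod
      (MeasureTheory.volume_preserving_piFinSuccAbove (fun _ : Fin 4 => ℂ) 0)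
    have := h2'.comp h1'
    convert this using 1
    all_goals rfl
  set G : ℂ → ℂ → (Fin 3 → ℂ) := fun a b => ![g2 a b, g3 a b, g4 a b] with hGdef
  have hGm : Measurable (fun p : ℂ × ℂ => G p.1 p.2) := by
    rw [measurable_pi_iff]
    intro k
    fin_cases k
    · simpa [G, Function.uncurry_def] using hg2
    · simpa [G, Function.uncurry_def] using hg3
    · simpa [G, Function.uncurry_def] using hg4
  set Ψ : ℂ × (ℂ × (Fin 3 → ℂ)) → ℂ × (ℂ × (Fin 3 → ℂ)) :=
    fun p => (p.1, (p.2.1, fun k => p.2.2 k - G p.1 p.2.1 k)) with hΨdef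
  have hinner : ∀ a b : ℂ, MeasurePreserving (fun u : Fin 3 → ℂ => u - G a b)
      volume volume := fun a b => measurePreserving_sub_right volume (G a b)
  have hmid : ∀ a : ℂ, MeasurePreserving
      (fun q : ℂ × (Fin 3 → ℂ) => (q.1, fun k => q.2 k - G a q.1 k))
      volume volume := by
    intro a
    rw [Measure.volume_eq_prod]
    have hm : Measurable (Function.uncurry
        (fun b (u : Fin 3 → ℂ) => fun k => u k - G a b k)) := by
      rw [measurable_pi_iff]
      intro k
      exact ((measurable_pi_apply k).comp measurable_snd).sub
        (((measurable_pi_apply k).comp (hGm.comp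
          (measurable_const.prodMk measurable_id))).comp measurable_fst)
    refine MeasurePreserving.skew_product (MeasurePreserving.id _) hm ?_
    refine Filter.Eventually.of_forall (fun b => ?_)
    have : (fun (u : Fin 3 → ℂ) => fun k => u k - G a b k)
        = (fun u : Fin 3 → ℂ => u - G a b) := by
      funext u; funext k; rfl
    rw [this]
    exact (hinner a b).map_eq
  have hΨ : MeasurePreserving Ψ volume volume := by
    rw [Measure.volume_eq_prod]
    have hm : Measurable (Function.uncurry
        (fun a (q : ℂ × (Fin 3 → ℂ)) => (q.1, fun k => q.2 k - G a q.1 k))) := by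
      apply Measurable.prodMk
      · exact measurable_fst.comp measurable_snd
      · rw [measurable_pi_iff]
        intro k
        exact ((measurable_pi_apply k).comp (measurable_snd.comp measurable_snd)).sub
          ((measurable_pi_apply k).comp (hGm.comp
            (measurable_fst.prodMk (measurable_fst.comp measurable_snd))))
    refine MeasurePreserving.skew_product (MeasurePreserving.id _) hm ?_
    refine Filter.Eventually.of_forall (fun a => ?_)
    have := (hmid a).map_eq
    rwa [Measure.volume_eq_prod] at this
  -- the box
  set Box : Set (ℂ × (ℂ × (Fin 3 → ℂ))) :=
    closedBall 0 r0 ×ˢ (closedBall 0 r1 ×ˢ univ.pi fun k => closedBall 0 (![r2,r3,r4] k))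
    with hBoxdef
  have hBoxm : MeasurableSet Box := by
    exact (measurableSet_closedBall).prod ((measurableSet_closedBall).prod
      (MeasurableSet.univ_pi fun k => measurableSet_closedBall))
  have hset : slab g2 g3 g4 r0 r1 r2 r3 r4 = Φ ⁻¹' (Ψ ⁻¹' Box) := by
    ext x
    simp only [slab, mem_setOf_eq, mem_preimage, hΨdef, hΦdef, hBoxdef, mem_prod,
      mem_closedBall, Complex.dist_eq, sub_zero, mem_univ_pi]
    constructor
    · rintro ⟨c0, c1, c2, c3, c4⟩
      refine ⟨c0, c1, fun k => ?_⟩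
      fin_cases k
      · exact c2
      · exact c3
      · exact c4
    · rintro ⟨c0, c1, hk⟩
      exact ⟨c0, c1, hk 0, hk 1, hk 2⟩
  rw [hset, hΦ.measure_preimage ((hΨ.measurable hBoxm)).nullMeasurableSet,
    hΨ.measure_preimage hBoxm.nullMeasurableSet]
  rw [hBoxdef, Measure.volume_eq_prod, Measure.prod_prod, Measure.volume_eq_prod,
    Measure.prod_prod, volume_pi_pi]
  simp only [Complex.volume_closedBall, Fin.prod_univ_three, Matrix.cons_val_zero,
    Matrix.cons_val_one, Matrix.head_cons, Matrix.cons_val_two, Matrix.tail_cons]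
  rw [show ((NNReal.pi : ℝ≥0∞)) = ENNReal.ofReal Real.pi by
    rw [← NNReal.coe_real_pi, ENNReal.ofReal_coe_nnreal]]
  rw [← ENNReal.ofReal_pow h0, ← ENNReal.ofReal_pow h1, ← ENNReal.ofReal_pow h2,
    ← ENNReal.ofReal_pow h3, ← ENNReal.ofReal_pow h4]
  rw [← ENNReal.ofReal_mul (by positivity), ← ENNReal.ofReal_mul (by positivity),
    ← ENNReal.ofReal_mul (by positivity), ← ENNReal.ofReal_mul (by positivity),
    ← ENNReal.ofReal_mul (by positivity), ← ENNReal.ofReal_mul (by positivity),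
    ← ENNReal.ofReal_mul (by positivity), ← ENNReal.ofReal_mul (by positivity),
    ← ENNReal.ofReal_mul (by positivity)]
  congr 1
  ring

lemma measurable_pair (c0 c1 : ℂ) (r : ℝ) :
    MeasurableSet {t : Fin 2 → ℂ | ‖t 0 - c0‖ ≤ r ∧ ‖t 1 - c1‖ ≤ r} := by
  have habs : ∀ (c : ℂ) (i : Fin 2), Measurable (fun t : Fin 2 → ℂ => ‖t i - c‖) := by
    intro c i
    simpa using ((measurable_pi_apply i).sub measurable_const).norm
  exact (measurableSet_le (habs c0 0) measurable_const).inter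
    (measurableSet_le (habs c1 1) measurable_const)

lemma volume_pair (c0 c1 : ℂ) {r : ℝ} (hr : 0 ≤ r) :
    volume {t : Fin 2 → ℂ | ‖t 0 - c0‖ ≤ r ∧ ‖t 1 - c1‖ ≤ r}
      = ENNReal.ofReal (Real.pi ^ 2 * (r * r) ^ 2) := by
  have : {t : Fin 2 → ℂ | ‖t 0 - c0‖ ≤ r ∧ ‖t 1 - c1‖ ≤ r}
      = univ.pi fun i : Fin 2 => closedBall (![c0, c1] i) r := by
    ext t
    simp only [mem_setOf_eq, mem_univ_pi, mem_closedBall, Complex.dist_eq]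
    constructor
    · rintro ⟨a, b⟩ i
      fin_cases i
      · exact a
      · exact b
    · intro h
      exact ⟨h 0, h 1⟩
  rw [this, volume_pi_pi]
  simp only [Complex.volume_closedBall, Fin.prod_univ_two]
  rw [show ((NNReal.pi : ℝ≥0∞)) = ENNReal.ofReal Real.pi by
    rw [← NNReal.coe_real_pi, ENNReal.ofReal_coe_nnreal]]
  rw [← ENNReal.ofReal_pow hr, ← ENNReal.ofReal_mul (by positivity),
    ← ENNReal.ofReal_mul (by positivity)]
  congr 1
  ring

def Kset : Set (Fin 2 → ℂ) := {t | ‖t 0‖ + ‖t 1‖ ≤ 1}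

lemma measurable_Kset : MeasurableSet Kset := by
  have : Measurable (fun t : Fin 2 → ℂ => ‖t 0‖ + ‖t 1‖) := by
    have h0 : Measurable (fun t : Fin 2 → ℂ => ‖t 0‖) := by
      simpa using (measurable_pi_apply (0 : Fin 2)).norm
    have h1 : Measurable (fun t : Fin 2 → ℂ => ‖t 1‖) := by
      simpa using (measurable_pi_apply (1 : Fin 2)).norm
    exact h0.add h1
  exact measurableSet_le this measurable_const

lemma volume_Kset_lt_top : volume Kset < ∞ := by
  have hsub : Kset ⊆ univ.pi fun _ : Fin 2 => closedBall (0 : ℂ) 1 := by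
    intro t ht
    simp only [mem_univ_pi, mem_closedBall, Complex.dist_eq, sub_zero]
    have h0 : (0:ℝ) ≤ ‖t 0‖ := norm_nonneg _
    have h1 : (0:ℝ) ≤ ‖t 1‖ := norm_nonneg _
    have := ht; simp only [Kset, mem_setOf_eq] at this
    intro i
    fin_cases i
    · show ‖t 0‖ ≤ 1; linarith
    · show ‖t 1‖ ≤ 1; linarith
  calc volume Kset ≤ volume (univ.pi fun _ : Fin 2 => closedBall (0 : ℂ) 1) :=
        measure_mono hsub
    _ < ∞ := by
        rw [volume_pi_pi]
        simp only [Complex.volume_closedBall, Fin.prod_univ_two]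
        exact ENNReal.mul_lt_top
          (ENNReal.mul_lt_top (by simp) ENNReal.coe_lt_top)
          (ENNReal.mul_lt_top (by simp) ENNReal.coe_lt_top)

lemma measurable_gammaMC_add (x : Fin 5 → ℂ) :
    Measurable (fun t : Fin 2 → ℂ => x + gammaMC t) := by
  rw [measurable_pi_iff]
  intro i
  have h0 : Measurable (fun t : Fin 2 → ℂ => t 0) := measurable_pi_apply _
  have h1 : Measurable (fun t : Fin 2 → ℂ => t 1) := measurable_pi_apply _
  fin_cases i
  · simpa [gammaMC] using (show Measurable fun t : Fin 2 → ℂ => x 0 + t 0 from measurable_const.add h0)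
  · simpa [gammaMC] using (show Measurable fun t : Fin 2 → ℂ => x 1 + t 1 from measurable_const.add h1)
  · simpa [gammaMC] using (show Measurable fun t : Fin 2 → ℂ => x 2 + t 0 ^ 2 from measurable_const.add (h0.pow_const 2))
  · simpa [gammaMC] using (show Measurable fun t : Fin 2 → ℂ => x 3 + 2 * t 0 * t 1 from measurable_const.add ((measurable_const.mul h0).mul h1))
  · simpa [gammaMC] using (show Measurable fun t : Fin 2 → ℂ => x 4 + t 1 ^ 2 from measurable_const.add (h1.pow_const 2))

lemma Rf_lower {E : Set (Fin 5 → ℂ)} (hE : MeasurableSet E) (x : Fin 5 → ℂ)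
    {S : Set (Fin 2 → ℂ)} (hS : MeasurableSet S) (hSK : S ⊆ Kset)
    (hmem : ∀ t ∈ S, x + gammaMC t ∈ E) :
    (volume S).toReal ≤ ∫ t in Kset, (E.indicator (fun _ => (1:ℝ))) (x + gammaMC t) := by
  have hγ := measurable_gammaMC_add x
  set U : Set (Fin 2 → ℂ) := (fun t => x + gammaMC t) ⁻¹' E with hUdef
  have hU : MeasurableSet U := hγ hE
  have hfun : (fun t => (E.indicator (fun _ => (1:ℝ))) (x + gammaMC t))
      = U.indicator (fun _ => (1:ℝ)) := by
    funext t
    by_cases h : x + gammaMC t ∈ E <;> simp [Set.indicator_apply, h, hUdef, Set.mem_preimage]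
  rw [hfun]
  have hint : ∀ {V : Set (Fin 2 → ℂ)}, MeasurableSet V →
      IntegrableOn (V.indicator (fun _ => (1:ℝ))) Kset volume := by
    intro V hV
    rw [IntegrableOn, integrable_indicator_iff hV]
    refine integrableOn_const (ne_of_lt ?_)
    calc (volume.restrict Kset) V ≤ (volume.restrict Kset) univ := measure_mono (subset_univ _)
      _ = volume Kset := by rw [Measure.restrict_apply_univ]
      _ < ∞ := volume_Kset_lt_top
  have hSsubU : S ⊆ U := fun t ht => hmem t ht
  have hle : ∀ t ∈ Kset, S.indicator (fun _ => (1:ℝ)) t ≤ U.indicator (fun _ => (1:ℝ)) t := by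
    intro t _
    exact Set.indicator_le_indicator_of_subset hSsubU (fun _ => zero_le_one) t
  have := setIntegral_mono_on (hint hS) (hint hU) measurable_Kset hle
  have heq : ∫ t in Kset, S.indicator (fun _ => (1:ℝ)) t = (volume S).toReal := by
    rw [setIntegral_indicator hS, inter_eq_self_of_subset_right hSK]
    simp [Measure.real]
  linarith [this, heq.ge]

lemma abs_add3 (a b c : ℂ) :
    ‖a + b + c‖ ≤ ‖a‖ + ‖b‖ + ‖c‖ := by
  calc ‖a + b + c‖ ≤ ‖a + b‖ + ‖c‖ := norm_add_le _ _
    _ ≤ ‖a‖ + ‖b‖ + ‖c‖ := by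
        have := norm_add_le a b; linarith

lemma abs_add4 (a b c d : ℂ) :
    ‖a + b + c + d‖
      ≤ ‖a‖ + ‖b‖ + ‖c‖ + ‖d‖ := by
  calc ‖a + b + c + d‖ ≤ ‖a + b + c‖ + ‖d‖ :=
        norm_add_le _ _
    _ ≤ _ := by have := abs_add3 a b c; linarith

lemma rpow_pow {x : ℝ} (hx : 0 < x) (n : ℕ) (w : ℝ) :
    (x ^ n) ^ w = x ^ ((n : ℝ) * w) := by
  rw [← Real.rpow_natCast x n, ← Real.rpow_mul hx.le]

lemma exists_delta {A B ε : ℝ} (hA : 0 ≤ A) (hB : 0 < B) (hε : 0 < ε) {a b : ℝ}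
    (hab : b < a) : ∃ δ : ℝ, 0 < δ ∧ δ ≤ ε ∧ A * δ ^ a < B * δ ^ b := by
  have hc : 0 < a - b := by linarith
  set M : ℝ := B / (A + 1) with hM
  have hMpos : 0 < M := div_pos hB (by linarith)
  set δ0 : ℝ := M ^ (a - b)⁻¹ with hδ0def
  have hδ0 : 0 < δ0 := Real.rpow_pos_of_pos hMpos _
  refine ⟨min ε (δ0 / 2), lt_min hε (by linarith), min_le_left _ _, ?_⟩
  set δ := min ε (δ0 / 2) with hδdef
  have hδpos : 0 < δ := lt_min hε (by linarith)
  have hδlt : δ < δ0 := (min_le_right _ _).trans_lt (by linarith)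
  have hpow : δ ^ (a - b) < M := by
    have h1 : δ ^ (a - b) < δ0 ^ (a - b) :=
      Real.rpow_lt_rpow hδpos.le hδlt hc
    have h2 : δ0 ^ (a - b) = M := by
      rw [hδ0def, ← Real.rpow_mul hMpos.le, inv_mul_cancel₀ hc.ne', Real.rpow_one]
    linarith
  have hkey : A * δ ^ (a - b) < B := by
    have h3 : A * δ ^ (a - b) ≤ A * M :=
      mul_le_mul_of_nonneg_left hpow.le hA
    have h4 : A * M < (A + 1) * M := by nlinarith
    have h5 : (A + 1) * M = B := by
      rw [hM]; field_simp
    linarith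
  have hsplit : δ ^ a = δ ^ (a - b) * δ ^ b := by
    rw [← Real.rpow_add hδpos]; ring_nf
  have hbpos : 0 < δ ^ b := Real.rpow_pos_of_pos hδpos _
  calc A * δ ^ a = (A * δ ^ (a - b)) * δ ^ b := by rw [hsplit]; ring
    _ < B * δ ^ b := by exact mul_lt_mul_of_pos_right hkey hbpos

lemma eLpNorm_indicator_eq {s : Set (Fin 5 → ℂ)} (hs : MeasurableSet s) {c : ℝ} (hc : 0 ≤ c)
    {X : ℝ} (hX : 0 < X) (hvol : volume s = ENNReal.ofReal X) {r : ℝ≥0∞} (hr : r ≠ 0) :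
    eLpNorm (s.indicator (fun _ => c)) r volume = ENNReal.ofReal (c * X ^ (r⁻¹.toReal)) := by
  have hμ : volume s ≠ 0 := by
    rw [hvol]; exact (ENNReal.ofReal_pos.2 hX).ne'
  rw [eLpNorm_indicator_const' hs hμ hr, hvol, one_div, ← ENNReal.toReal_inv,
    ENNReal.ofReal_rpow_of_pos hX, Real.enorm_eq_ofReal hc, ← ENNReal.ofReal_mul hc]

lemma case1_mem {δ : ℝ} (hδ0 : 0 < δ) (hδ : δ ≤ 1/2) {x : Fin 5 → ℂ}
    (hx : x ∈ slab (fun _ _ => 0) (fun _ _ => 0) (fun _ _ => 0) δ δ δ δ δ)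
    {t : Fin 2 → ℂ}
    (ht : t ∈ {t : Fin 2 → ℂ | ‖t 0 - 0‖ ≤ 1/4 ∧ ‖t 1 - 0‖ ≤ 1/4}) :
    x + gammaMC t ∈ slab (fun a b => a^2) (fun a b => 2*a*b) (fun a b => b^2)
      2 2 (4*δ) (4*δ) (4*δ) := by
  simp only [slab, mem_setOf_eq, sub_zero] at hx ht ⊢
  obtain ⟨b0, b1, b2, b3, b4⟩ := hx
  obtain ⟨k0, k1⟩ := ht
  have n0 := norm_nonneg (x 0)
  have n1 := norm_nonneg (x 1)
  have m0 := norm_nonneg (t 0)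
  have m1 := norm_nonneg (t 1)
  simp only [Pi.add_apply, gammaMC, Matrix.cons_val_zero, Matrix.cons_val_one, Matrix.head_cons,
    Matrix.cons_val_two, Matrix.tail_cons, Matrix.cons_val_three, Matrix.cons_val_four]
  refine ⟨?_, ?_, ?_, ?_, ?_⟩
  · have := norm_add_le (x 0) (t 0); linarith
  · have := norm_add_le (x 1) (t 1); linarith
  · have hid : x 2 + t 0^2 - (x 0 + t 0)^2
        = x 2 + (-((x 0)^2)) + (-(2*(x 0)*(t 0))) := by ring
    rw [hid]
    refine le_trans (abs_add3 _ _ _) ?_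
    have e1 : ‖-((x 0)^2)‖ = ‖x 0‖^2 := by
      rw [norm_neg, norm_pow]
    have e2 : ‖-(2*(x 0)*(t 0))‖ = 2 * ‖x 0‖ * ‖t 0‖ := by
      rw [norm_neg, norm_mul, norm_mul, Complex.norm_two]
    rw [e1, e2]
    nlinarith
  · have hid : x 3 + 2*t 0*t 1 - 2*(x 0 + t 0)*(x 1 + t 1)
        = x 3 + (-(2*(x 0)*(x 1))) + (-(2*(x 0)*(t 1))) + (-(2*(x 1)*(t 0))) := by ring
    rw [hid]
    refine le_trans (abs_add4 _ _ _ _) ?_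
    have e1 : ‖-(2*(x 0)*(x 1))‖ = 2 * ‖x 0‖ * ‖x 1‖ := by
      rw [norm_neg, norm_mul, norm_mul, Complex.norm_two]
    have e2 : ‖-(2*(x 0)*(t 1))‖ = 2 * ‖x 0‖ * ‖t 1‖ := by
      rw [norm_neg, norm_mul, norm_mul, Complex.norm_two]
    have e3 : ‖-(2*(x 1)*(t 0))‖ = 2 * ‖x 1‖ * ‖t 0‖ := by
      rw [norm_neg, norm_mul, norm_mul, Complex.norm_two]
    rw [e1, e2, e3]
    nlinarith
  · have hid : x 4 + t 1^2 - (x 1 + t 1)^2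
        = x 4 + (-((x 1)^2)) + (-(2*(x 1)*(t 1))) := by ring
    rw [hid]
    refine le_trans (abs_add3 _ _ _) ?_
    have e1 : ‖-((x 1)^2)‖ = ‖x 1‖^2 := by
      rw [norm_neg, norm_pow]
    have e2 : ‖-(2*(x 1)*(t 1))‖ = 2 * ‖x 1‖ * ‖t 1‖ := by
      rw [norm_neg, norm_mul, norm_mul, Complex.norm_two]
    rw [e1, e2]
    nlinarith

lemma case1_K'_sub :
    {t : Fin 2 → ℂ | ‖t 0 - 0‖ ≤ 1/4 ∧ ‖t 1 - 0‖ ≤ 1/4} ⊆ Kset := by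
  rintro t ⟨h0, h1⟩
  rw [sub_zero] at h0 h1
  show ‖t 0‖ + ‖t 1‖ ≤ 1
  linarith

lemma case2_mem {δ : ℝ} (hδ0 : 0 < δ) (hδ : δ ≤ 1/2) {x : Fin 5 → ℂ}
    (hx : x ∈ slab (fun a _ => -(a^2)) (fun a b => -(2*a*b)) (fun _ b => -(b^2))
      (1/8) (1/8) (δ/100) (δ/100) (δ/100))
    {t : Fin 2 → ℂ}
    (ht : t ∈ {t : Fin 2 → ℂ | ‖t 0 - -(x 0)‖ ≤ δ/2 ∧
      ‖t 1 - -(x 1)‖ ≤ δ/2}) :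
    x + gammaMC t ∈ slab (fun _ _ => 0) (fun _ _ => 0) (fun _ _ => 0) δ δ δ δ δ := by
  simp only [slab, mem_setOf_eq, sub_neg_eq_add] at hx ht ⊢
  obtain ⟨b0, b1, b2, b3, b4⟩ := hx
  obtain ⟨k0, k1⟩ := ht
  have n0 := norm_nonneg (x 0)
  have n1 := norm_nonneg (x 1)
  have m0 := norm_nonneg (t 0 + x 0)
  have m1 := norm_nonneg (t 1 + x 1)
  simp only [Pi.add_apply, gammaMC, Matrix.cons_val_zero, Matrix.cons_val_one, Matrix.head_cons,
    Matrix.cons_val_two, Matrix.tail_cons, Matrix.cons_val_three, Matrix.cons_val_four, sub_zero]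
  refine ⟨?_, ?_, ?_, ?_, ?_⟩
  · rw [add_comm]; linarith
  · rw [add_comm]; linarith
  · have hid : x 2 + t 0^2
        = (x 2 + (x 0)^2) + (t 0 + x 0)^2 + (-(2*(t 0 + x 0)*(x 0))) := by ring
    rw [hid]
    refine le_trans (abs_add3 _ _ _) ?_
    have e1 : ‖(t 0 + x 0)^2‖ = ‖t 0 + x 0‖^2 := norm_pow _ _
    have e2 : ‖-(2*(t 0 + x 0)*(x 0))‖
        = 2 * ‖t 0 + x 0‖ * ‖x 0‖ := by
      rw [norm_neg, norm_mul, norm_mul, Complex.norm_two]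
    rw [e1, e2]
    nlinarith
  · have hid : x 3 + 2*t 0*t 1
        = (x 3 + 2*(x 0)*(x 1)) + 2*(t 0 + x 0)*(t 1 + x 1)
          + (-(2*(t 0 + x 0)*(x 1))) + (-(2*(t 1 + x 1)*(x 0))) := by ring
    rw [hid]
    refine le_trans (abs_add4 _ _ _ _) ?_
    have e1 : ‖2*(t 0 + x 0)*(t 1 + x 1)‖
        = 2 * ‖t 0 + x 0‖ * ‖t 1 + x 1‖ := by
      rw [norm_mul, norm_mul, Complex.norm_two]
    have e2 : ‖-(2*(t 0 + x 0)*(x 1))‖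
        = 2 * ‖t 0 + x 0‖ * ‖x 1‖ := by
      rw [norm_neg, norm_mul, norm_mul, Complex.norm_two]
    have e3 : ‖-(2*(t 1 + x 1)*(x 0))‖
        = 2 * ‖t 1 + x 1‖ * ‖x 0‖ := by
      rw [norm_neg, norm_mul, norm_mul, Complex.norm_two]
    rw [e1, e2, e3]
    nlinarith
  · have hid : x 4 + t 1^2
        = (x 4 + (x 1)^2) + (t 1 + x 1)^2 + (-(2*(t 1 + x 1)*(x 1))) := by ring
    rw [hid]
    refine le_trans (abs_add3 _ _ _) ?_
    have e1 : ‖(t 1 + x 1)^2‖ = ‖t 1 + x 1‖^2 := norm_pow _ _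
    have e2 : ‖-(2*(t 1 + x 1)*(x 1))‖
        = 2 * ‖t 1 + x 1‖ * ‖x 1‖ := by
      rw [norm_neg, norm_mul, norm_mul, Complex.norm_two]
    rw [e1, e2]
    nlinarith

lemma case2_T_sub {δ : ℝ} (hδ0 : 0 < δ) (hδ : δ ≤ 1/2) {x : Fin 5 → ℂ}
    (h0 : ‖x 0‖ ≤ 1/8) (h1 : ‖x 1‖ ≤ 1/8) :
    {t : Fin 2 → ℂ | ‖t 0 - -(x 0)‖ ≤ δ/2 ∧
      ‖t 1 - -(x 1)‖ ≤ δ/2} ⊆ Kset := by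
  rintro t ⟨k0, k1⟩
  rw [sub_neg_eq_add] at k0 k1
  show ‖t 0‖ + ‖t 1‖ ≤ 1
  have e0 : t 0 = (t 0 + x 0) + (-(x 0)) := by ring
  have e1 : t 1 = (t 1 + x 1) + (-(x 1)) := by ring
  have a0 : ‖t 0‖ ≤ ‖t 0 + x 0‖ + ‖x 0‖ := by
    calc ‖t 0‖ = ‖(t 0 + x 0) + (-(x 0))‖ := by rw [← e0]
      _ ≤ ‖t 0 + x 0‖ + ‖-(x 0)‖ := norm_add_le _ _
      _ = ‖t 0 + x 0‖ + ‖x 0‖ := by rw [norm_neg]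
  have a1 : ‖t 1‖ ≤ ‖t 1 + x 1‖ + ‖x 1‖ := by
    calc ‖t 1‖ = ‖(t 1 + x 1) + (-(x 1))‖ := by rw [← e1]
      _ ≤ ‖t 1 + x 1‖ + ‖-(x 1)‖ := norm_add_le _ _
      _ = ‖t 1 + x 1‖ + ‖x 1‖ := by rw [norm_neg]
  linarith

/-- sharpness — if `q > p` and `(1/p, 1/q)` is outside the closed
triangle with vertices `(0,0)`, `(1,1)`, `(5/8, 3/8)`, no `L^p → L^q` bound holds
for the averaging operator over the maximal quadratic surface in `ℂ⁵`. -/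
theorem statement3 (p q : ℝ≥0∞) (hp : 1 ≤ p) (hq : 1 ≤ q) (hpq : p < q)
    (h : (p⁻¹.toReal, q⁻¹.toReal) ∉
      convexHull ℝ {((0 : ℝ), (0 : ℝ)), (1, 1), (5/8, 3/8)}) :
    ¬ ∃ C : ℝ≥0, ∀ f : (Fin 5 → ℂ) → ℝ, MemLp f p volume → (∀ x, 0 ≤ f x) →
      eLpNorm (fun x => ∫ t in {t : Fin 2 → ℂ | ‖t 0‖ + ‖t 1‖ ≤ 1},
          f (x + gammaMC t)) q volume
        ≤ C * eLpNorm f p volume := by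
  rintro ⟨C, hC⟩
  have hp0 : p ≠ 0 := (lt_of_lt_of_le zero_lt_one hp).ne'
  have hq0 : q ≠ 0 := (lt_of_lt_of_le zero_lt_one hq).ne'
  have hpt : p ≠ ∞ := hpq.ne_top
  set u := p⁻¹.toReal with hudef
  set v := q⁻¹.toReal with hvdef
  have hpinv_ne_top : p⁻¹ ≠ ∞ := ENNReal.inv_ne_top.2 hp0
  have hu_pos : 0 < u := by
    rw [hudef, ENNReal.toReal_inv]
    exact inv_pos.2 (ENNReal.toReal_pos hp0 hpt)
  have hv_nonneg : 0 ≤ v := ENNReal.toReal_nonneg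
  have hvu : v ≤ u := ENNReal.toReal_mono hpinv_ne_top (ENNReal.inv_le_inv.2 hpq.le)
  have hcases : v < 3/5*u ∨ v < 5/3*u - 2/3 := by
    by_contra hcon
    push_neg at hcon
    exact h (triangle_mem hvu hcon.1 hcon.2)
  have hu_eq : 1 / p.toReal = u := by rw [hudef, one_div, ENNReal.toReal_inv]
  have hv_eq : 1 / q.toReal = v := by rw [hvdef, one_div, ENNReal.toReal_inv]
  have hπ : (0:ℝ) < Real.pi := Real.pi_pos
  rcases hcases with hcase | hcase
  · -- Case 1 : v < 3/5 u, use a thin neighborhood of the surface as f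
    obtain ⟨δ, hδ0, hδε, hkey⟩ := exists_delta
      (A := (C:ℝ)*(Real.pi^5*65536)^u) (B := (Real.pi^2*((1/4:ℝ)*(1/4))^2)*(Real.pi^5)^v)
      (ε := 1/2) (a := 6*u) (b := 10*v)
      (by positivity) (by positivity) (by norm_num) (by linarith)
    set c₀ : ℝ := Real.pi^2*((1/4:ℝ)*(1/4))^2 with hc₀def
    have hc₀ : 0 < c₀ := by positivity
    set Ef := slab (fun a b => a^2) (fun a b => 2*a*b) (fun a b => b^2)
      2 2 (4*δ) (4*δ) (4*δ) with hEfdef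
    have hg2 : Measurable (Function.uncurry fun a _ : ℂ => a^2) :=
      measurable_fst.pow_const 2
    have hg3 : Measurable (Function.uncurry fun a b : ℂ => 2*a*b) :=
      (measurable_const.mul measurable_fst).mul measurable_snd
    have hg4 : Measurable (Function.uncurry fun _ b : ℂ => b^2) :=
      measurable_snd.pow_const 2
    have hEfm : MeasurableSet Ef := measurable_slab hg2 hg3 hg4 _ _ _ _ _
    have hvolEf : volume Ef = ENNReal.ofReal (Real.pi^5*(2*2*(4*δ)*(4*δ)*(4*δ))^2) :=
      volume_slab hg2 hg3 hg4 (by norm_num) (by norm_num) (by positivity) (by positivity)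
        (by positivity)
    set f := Ef.indicator (fun _ => (1:ℝ)) with hfdef
    have hmemf : MemLp f p volume := by
      refine memLp_indicator_const p hEfm 1 (Or.inr ?_)
      rw [hvolEf]; exact ENNReal.ofReal_ne_top
    have hfnn : ∀ x, 0 ≤ f x := fun x => Set.indicator_nonneg (fun _ _ => zero_le_one) x
    have hCf := hC f hmemf hfnn
    have hKrw : {t : Fin 2 → ℂ | ‖t 0‖ + ‖t 1‖ ≤ 1} = Kset := rfl
    rw [hKrw] at hCf
    -- lower bound set
    set Blow := slab (fun _ _ => (0:ℂ)) (fun _ _ => 0) (fun _ _ => 0) δ δ δ δ δ with hBlowdef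
    have hz : Measurable (Function.uncurry fun _ _ : ℂ => (0:ℂ)) := measurable_const
    have hBlowm : MeasurableSet Blow := measurable_slab hz hz hz _ _ _ _ _
    have hvolBlow : volume Blow = ENNReal.ofReal (Real.pi^5*(δ*δ*δ*δ*δ)^2) :=
      volume_slab hz hz hz hδ0.le hδ0.le hδ0.le hδ0.le hδ0.le
    -- pointwise lower bound for the averaging operator
    have hnorm : ∀ x, ‖(Blow.indicator fun _ => c₀) x‖
        ≤ ‖∫ t in Kset, f (x + gammaMC t)‖ := by
      intro x
      have hRf0 : 0 ≤ ∫ t in Kset, f (x + gammaMC t) :=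
        integral_nonneg fun t => hfnn _
      by_cases hx : x ∈ Blow
      · rw [Set.indicator_of_mem hx]
        have h1 := Rf_lower hEfm x (measurable_pair 0 0 (1/4)) case1_K'_sub
          (fun t ht => case1_mem hδ0 hδε hx ht)
        rw [volume_pair 0 0 (by norm_num : (0:ℝ) ≤ 1/4),
          ENNReal.toReal_ofReal (by positivity)] at h1
        rw [Real.norm_of_nonneg hc₀.le, Real.norm_of_nonneg hRf0]
        exact h1
      · rw [Set.indicator_of_notMem hx, norm_zero]
        exact norm_nonneg _
    have hlow : eLpNorm (Blow.indicator fun _ => c₀) q volume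
        ≤ eLpNorm (fun x => ∫ t in Kset, f (x + gammaMC t)) q volume :=
      eLpNorm_mono hnorm
    set X1 : ℝ := Real.pi^5*(δ*δ*δ*δ*δ)^2 with hX1def
    set Y1 : ℝ := Real.pi^5*(2*2*(4*δ)*(4*δ)*(4*δ))^2 with hY1def
    have hX1pos : 0 < X1 := by rw [hX1def]; positivity
    have hY1pos : 0 < Y1 := by rw [hY1def]; positivity
    have h2 : eLpNorm (Blow.indicator fun _ => c₀) q volume
        = ENNReal.ofReal (c₀ * X1 ^ v) :=
      eLpNorm_indicator_eq hBlowm hc₀.le hX1pos hvolBlow hq0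
    have h3 : eLpNorm f p volume = ENNReal.ofReal ((1:ℝ) * Y1 ^ u) := by
      rw [hfdef]
      exact eLpNorm_indicator_eq hEfm zero_le_one hY1pos hvolEf hp0
    have hchain : ENNReal.ofReal (c₀ * X1 ^ v)
        ≤ ENNReal.ofReal ((C:ℝ) * ((1:ℝ) * Y1 ^ u)) := by
      calc ENNReal.ofReal (c₀ * X1 ^ v) = eLpNorm (Blow.indicator fun _ => c₀) q volume :=
            h2.symm
        _ ≤ eLpNorm (fun x => ∫ t in Kset, f (x + gammaMC t)) q volume := hlow
        _ ≤ C * eLpNorm f p volume := hCf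
        _ = ENNReal.ofReal ((C:ℝ) * ((1:ℝ) * Y1 ^ u)) := by
            rw [h3, ← ENNReal.ofReal_coe_nnreal, ← ENNReal.ofReal_mul C.coe_nonneg]
    have hreal : c₀ * X1 ^ v ≤ (C:ℝ) * ((1:ℝ) * Y1 ^ u) :=
      (ENNReal.ofReal_le_ofReal_iff (by positivity)).1 hchain
    -- rewrite both sides in the normal form of `exists_delta`
    have lhs_eq : c₀ * X1 ^ v = (c₀*(Real.pi^5)^v) * δ^(10*v) := by
      have hX1' : X1 = Real.pi^5 * δ^(10:ℕ) := by rw [hX1def]; ring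
      rw [hX1', Real.mul_rpow (by positivity) (by positivity), rpow_pow hδ0 10 v]
      push_cast
      ring
    have rhs_eq : (C:ℝ) * ((1:ℝ) * Y1 ^ u) = ((C:ℝ)*(Real.pi^5*65536)^u) * δ^(6*u) := by
      have hY1' : Y1 = (Real.pi^5*65536) * δ^(6:ℕ) := by rw [hY1def]; ring
      rw [hY1', Real.mul_rpow (by positivity) (by positivity), rpow_pow hδ0 6 u]
      push_cast
      ring
    rw [lhs_eq, rhs_eq] at hreal
    linarith
  · -- Case 2 : v < 5/3 u - 2/3, use a small ball as f
    obtain ⟨δ, hδ0, hδε, hkey⟩ := exists_delta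
      (A := (C:ℝ)*(Real.pi^5)^u)
      (B := (Real.pi^2/16)*(Real.pi^5*((1/8:ℝ)*(1/8)*(1/100)*(1/100)*(1/100))^2)^v)
      (ε := 1/2) (a := 10*u) (b := 4+6*v)
      (by positivity) (by positivity) (by norm_num) (by linarith)
    set c₁ : ℝ := Real.pi^2*((δ/2)*(δ/2))^2 with hc₁def
    have hc₁ : 0 < c₁ := by rw [hc₁def]; positivity
    set Bf := slab (fun _ _ => (0:ℂ)) (fun _ _ => 0) (fun _ _ => 0) δ δ δ δ δ with hBfdef
    have hz : Measurable (Function.uncurry fun _ _ : ℂ => (0:ℂ)) := measurable_const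
    have hBfm : MeasurableSet Bf := measurable_slab hz hz hz _ _ _ _ _
    have hvolBf : volume Bf = ENNReal.ofReal (Real.pi^5*(δ*δ*δ*δ*δ)^2) :=
      volume_slab hz hz hz hδ0.le hδ0.le hδ0.le hδ0.le hδ0.le
    set f := Bf.indicator (fun _ => (1:ℝ)) with hfdef
    have hmemf : MemLp f p volume := by
      refine memLp_indicator_const p hBfm 1 (Or.inr ?_)
      rw [hvolBf]; exact ENNReal.ofReal_ne_top
    have hfnn : ∀ x, 0 ≤ f x := fun x => Set.indicator_nonneg (fun _ _ => zero_le_one) x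
    have hCf := hC f hmemf hfnn
    have hKrw : {t : Fin 2 → ℂ | ‖t 0‖ + ‖t 1‖ ≤ 1} = Kset := rfl
    rw [hKrw] at hCf
    set Elow := slab (fun a _ => -(a^2)) (fun a b => -(2*a*b)) (fun _ b => -(b^2))
      (1/8) (1/8) (δ/100) (δ/100) (δ/100) with hElowdef
    have hg2 : Measurable (Function.uncurry fun a _ : ℂ => -(a^2)) :=
      (measurable_fst.pow_const 2).neg
    have hg3 : Measurable (Function.uncurry fun a b : ℂ => -(2*a*b)) :=
      ((measurable_const.mul measurable_fst).mul measurable_snd).neg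
    have hg4 : Measurable (Function.uncurry fun _ b : ℂ => -(b^2)) :=
      (measurable_snd.pow_const 2).neg
    have hElowm : MeasurableSet Elow := measurable_slab hg2 hg3 hg4 _ _ _ _ _
    have hvolElow : volume Elow
        = ENNReal.ofReal (Real.pi^5*((1/8:ℝ)*(1/8)*(δ/100)*(δ/100)*(δ/100))^2) :=
      volume_slab hg2 hg3 hg4 (by norm_num) (by norm_num) (by positivity) (by positivity)
        (by positivity)
    have hnorm : ∀ x, ‖(Elow.indicator fun _ => c₁) x‖
        ≤ ‖∫ t in Kset, f (x + gammaMC t)‖ := by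
      intro x
      have hRf0 : 0 ≤ ∫ t in Kset, f (x + gammaMC t) :=
        integral_nonneg fun t => hfnn _
      by_cases hx : x ∈ Elow
      · rw [Set.indicator_of_mem hx]
        have hx' := hx
        rw [hElowdef] at hx'
        obtain ⟨e0, e1, -, -, -⟩ := hx'
        have h1 := Rf_lower hBfm x (measurable_pair (-(x 0)) (-(x 1)) (δ/2))
          (case2_T_sub hδ0 hδε e0 e1) (fun t ht => case2_mem hδ0 hδε hx ht)
        rw [volume_pair (-(x 0)) (-(x 1)) (by positivity : (0:ℝ) ≤ δ/2),
          ENNReal.toReal_ofReal (by positivity)] at h1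
        rw [Real.norm_of_nonneg hc₁.le, Real.norm_of_nonneg hRf0]
        calc c₁ = Real.pi^2*((δ/2)*(δ/2))^2 := hc₁def
          _ ≤ _ := h1
      · rw [Set.indicator_of_notMem hx, norm_zero]
        exact norm_nonneg _
    have hlow : eLpNorm (Elow.indicator fun _ => c₁) q volume
        ≤ eLpNorm (fun x => ∫ t in Kset, f (x + gammaMC t)) q volume :=
      eLpNorm_mono hnorm
    set X2 : ℝ := Real.pi^5*((1/8:ℝ)*(1/8)*(δ/100)*(δ/100)*(δ/100))^2 with hX2def
    set Y2 : ℝ := Real.pi^5*(δ*δ*δ*δ*δ)^2 with hY2def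
    have hX2pos : 0 < X2 := by rw [hX2def]; positivity
    have hY2pos : 0 < Y2 := by rw [hY2def]; positivity
    have h2 : eLpNorm (Elow.indicator fun _ => c₁) q volume
        = ENNReal.ofReal (c₁ * X2 ^ v) :=
      eLpNorm_indicator_eq hElowm hc₁.le hX2pos hvolElow hq0
    have h3 : eLpNorm f p volume = ENNReal.ofReal ((1:ℝ) * Y2 ^ u) := by
      rw [hfdef]
      exact eLpNorm_indicator_eq hBfm zero_le_one hY2pos hvolBf hp0
    have hchain : ENNReal.ofReal (c₁ * X2 ^ v)
        ≤ ENNReal.ofReal ((C:ℝ) * ((1:ℝ) * Y2 ^ u)) := by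
      calc ENNReal.ofReal (c₁ * X2 ^ v) = eLpNorm (Elow.indicator fun _ => c₁) q volume :=
            h2.symm
        _ ≤ eLpNorm (fun x => ∫ t in Kset, f (x + gammaMC t)) q volume := hlow
        _ ≤ C * eLpNorm f p volume := hCf
        _ = ENNReal.ofReal ((C:ℝ) * ((1:ℝ) * Y2 ^ u)) := by
            rw [h3, ← ENNReal.ofReal_coe_nnreal, ← ENNReal.ofReal_mul C.coe_nonneg]
    have hreal : c₁ * X2 ^ v ≤ (C:ℝ) * ((1:ℝ) * Y2 ^ u) :=
      (ENNReal.ofReal_le_ofReal_iff (by positivity)).1 hchain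
    have lhs_eq : c₁ * X2 ^ v
        = ((Real.pi^2/16)*(Real.pi^5*((1/8:ℝ)*(1/8)*(1/100)*(1/100)*(1/100))^2)^v)
          * δ^(4+6*v) := by
      have hX2' : X2 = (Real.pi^5*((1/8:ℝ)*(1/8)*(1/100)*(1/100)*(1/100))^2) * δ^(6:ℕ) := by
        rw [hX2def]; ring
      have hc₁' : c₁ = (Real.pi^2/16) * δ^(4:ℕ) := by rw [hc₁def]; ring
      rw [hX2', hc₁', Real.mul_rpow (by positivity) (by positivity), rpow_pow hδ0 6 v,
        Real.rpow_add hδ0, ← Real.rpow_natCast δ 4]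
      push_cast
      ring
    have rhs_eq : (C:ℝ) * ((1:ℝ) * Y2 ^ u) = ((C:ℝ)*(Real.pi^5)^u) * δ^(10*u) := by
      have hY2' : Y2 = Real.pi^5 * δ^(10:ℕ) := by rw [hY2def]; ring
      rw [hY2', Real.mul_rpow (by positivity) (by positivity), rpow_pow hδ0 10 u]
      push_cast
      ring
    rw [lhs_eq, rhs_eq] at hreal
    linarith

end
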